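/- arXiv:2501.10781 — 8 statements merged into one kernel-verified Lean document; each statement's English description precedes it below -/
import Mathlib

section
/- Let r be an acyclic relation on a finite nonempty type V, and let L be the maximum number of vertices of an r-path, i.e., the greatest m such that there exist v₁, …, v_m ∈ V with r (v_t) (v_{t+1}) for all 1 ≤ t < m. Then the minimum, taken over all functions c : V → ℕ satisfying r u v → c u < c v, of the number of distinct values taken by c equals L. -/
/-- For an acyclic relation `r` on a finite nonempty type, the minimum number
of distinct values of a function `c : V → ℕ` with `r u v → c u < c v` equals
the greatest number of vertices of an `r`-path. -/
theorem min_classes_eq_longest_path {V : Type*} [Fintype V] [Nonempty V]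
    [DecidableEq V] (r : V → V → Prop)
    (hacyc : Irreflexive (Relation.TransGen r)) (L : ℕ)
    (hL : IsGreatest {m : ℕ | ∃ v : ℕ → V, ∀ t : ℕ, t + 1 < m → r (v t) (v (t + 1))} L) :
    IsLeast {k : ℕ | ∃ c : V → ℕ,
      (∀ u v : V, r u v → c u < c v) ∧ (Finset.univ.image c).card = k} L := by
  classical
  obtain ⟨hLmem, hLub⟩ := hL
  have hL1 : 1 ≤ L := hLub ⟨fun _ => Classical.arbitrary V, by omega⟩
  -- the set of lengths of paths ending at v
  set S : V → Set ℕ := fun v =>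
    {m | 1 ≤ m ∧ ∃ w : ℕ → V, (∀ t, t + 1 < m → r (w t) (w (t + 1))) ∧ w (m - 1) = v}
    with hSdef
  have hSne : ∀ v, (S v).Nonempty := fun v => ⟨1, le_refl 1, fun _ => v, by omega, rfl⟩
  have hSbd : ∀ v, ∀ m ∈ S v, m ≤ L := by
    rintro v m ⟨_, w, hw, _⟩
    exact hLub ⟨w, hw⟩
  set c : V → ℕ := fun v => sSup (S v) with hc
  have hcmem : ∀ v, c v ∈ S v := fun v =>
    Nat.sSup_mem (hSne v) ⟨L, fun m hm => hSbd v m hm⟩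
  have hcL : ∀ v, c v ≤ L := fun v => hSbd v _ (hcmem v)
  have hc1 : ∀ v, 1 ≤ c v := fun v => (hcmem v).1
  have hmono : ∀ u v : V, r u v → c u < c v := by
    intro u v huv
    obtain ⟨hcu1, w, hw, hwu⟩ := hcmem u
    have hmem : c u + 1 ∈ S v := by
      refine ⟨by omega, fun t => if t < c u then w t else v, ?_, ?_⟩
      · intro t ht
        by_cases h : t + 1 < c u
        · simpa [show t < c u by omega, h] using hw t h
        · have ht' : t = c u - 1 := by omega
          have hwt : w t = u := ht' ▸ hwu
          simp [show t < c u by omega, show ¬ (t + 1 < c u) by omega, hwt, huv]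
      · simp
    exact lt_of_lt_of_le (Nat.lt_succ_self _)
      (le_csSup ⟨L, fun m hm => hSbd v m hm⟩ hmem)
  have hlow : ∀ k ∈ {k : ℕ | ∃ c : V → ℕ,
      (∀ u v : V, r u v → c u < c v) ∧ (Finset.univ.image c).card = k}, L ≤ k := by
    rintro k ⟨d, hd, rfl⟩
    obtain ⟨v, hv⟩ := hLmem
    have hstrict : ∀ s t, s < t → t < L → d (v s) < d (v t) := by
      intro s t hst htL
      induction t with
      | zero => omega
      | succ n ih =>
        have h1 : d (v n) < d (v (n + 1)) := hd _ _ (hv n (by omega))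
        rcases Nat.lt_succ_iff_lt_or_eq.mp hst with h | h
        · exact (ih h (by omega)).trans h1
        · exact h ▸ h1
    calc L = (Finset.range L).card := (Finset.card_range L).symm
      _ ≤ (Finset.univ.image d).card := by
          refine Finset.card_le_card_of_injOn (fun t => d (v t))
            (fun t _ => Finset.mem_image.mpr ⟨v t, Finset.mem_univ _, rfl⟩) ?_
          intro s hs t ht h
          simp only [Finset.coe_range, Set.mem_Iio] at hs ht
          rcases lt_trichotomy s t with hlt | heq | hgt
          · exact absurd h (Nat.ne_of_lt (hstrict s t hlt ht))
          · exact heq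
          · exact absurd h.symm (Nat.ne_of_lt (hstrict t s hgt hs))
  have hsub : Finset.univ.image c ⊆ Finset.Icc 1 L := by
    intro x hx
    obtain ⟨v, _, rfl⟩ := Finset.mem_image.mp hx
    exact Finset.mem_Icc.mpr ⟨hc1 v, hcL v⟩
  have hle : (Finset.univ.image c).card ≤ L := by
    have := Finset.card_le_card hsub
    simpa using this
  have hge : L ≤ (Finset.univ.image c).card := hlow _ ⟨c, hmono, rfl⟩
  exact ⟨⟨c, hmono, le_antisymm hle hge⟩, hlow⟩
end

section
/- Let n ≥ 1, k < n, and let R : Fin k → Fin n → Fin n be a k×n Latin rectangle. Then there exists a bijection g : Fin n → Fin n such that g c ≠ R i c for every row index i : Fin k and every column c : Fin n; in other words, every k×n Latin rectangle with k < n can be extended by one further row to a (k+1)×n Latin rectangle. -/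
/-- `R` is a `k × n` Latin rectangle: every row is a bijection of `Fin n`,
and distinct rows disagree in every column. -/
def IsLatinRectangle {k n : ℕ} (R : Fin k → Fin n → Fin n) : Prop :=
  (∀ i : Fin k, Function.Bijective (R i)) ∧
    ∀ i i' : Fin k, i ≠ i' → ∀ c : Fin n, R i c ≠ R i' c

/-- Every `k × n` Latin rectangle with `k < n` can be extended by one further
row: there is a bijection `g` of `Fin n` disagreeing with every existing row
in every column. -/
theorem latin_rectangle_extend_one_row (n k : ℕ) (hn : 1 ≤ n) (hk : k < n)
    (R : Fin k → Fin n → Fin n) (hR : IsLatinRectangle R) :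
    ∃ g : Fin n → Fin n, Function.Bijective g ∧
      ∀ (i : Fin k) (c : Fin n), g c ≠ R i c := by
  classical
  set t : Fin n → Finset (Fin n) :=
    fun c => Finset.univ \ Finset.image (fun i => R i c) Finset.univ with ht
  have hmem : ∀ c v, v ∈ t c ↔ ∀ i, R i c ≠ v := by
    intro c v
    simp [ht, eq_comm]
  -- each column's allowed set has size n - k
  have hcardt : ∀ c, (t c).card = n - k := by
    intro c
    have himg : (Finset.image (fun i => R i c) Finset.univ).card = k := by
      rw [Finset.card_image_of_injective _ (fun i i' h => by
        by_contra hne; exact hR.2 i i' hne c h)]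
      simp
    rw [ht]
    simp [Finset.card_sdiff_of_subset (Finset.subset_univ _), himg]
  -- each value is allowed in exactly n - k columns
  have hcardv : ∀ v, (Finset.univ.filter fun c => v ∈ t c).card = n - k := by
    intro v
    have hsplit : (Finset.univ.filter fun c => v ∈ t c) =
        Finset.univ \ (Finset.univ.filter fun c => ∃ i, R i c = v) := by
      ext c
      simp [hmem, not_exists]
    have himg : (Finset.univ.filter fun c => ∃ i, R i c = v) =
        Finset.image (fun i => (Equiv.ofBijective _ (hR.1 i)).symm v) Finset.univ := by
      ext c
      simp only [Finset.mem_filter, Finset.mem_univ, true_and, Finset.mem_image]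
      constructor
      · rintro ⟨i, hi⟩
        exact ⟨i, by rw [← hi]; exact (Equiv.ofBijective _ (hR.1 i)).symm_apply_apply c⟩
      · rintro ⟨i, rfl⟩
        exact ⟨i, (Equiv.ofBijective _ (hR.1 i)).apply_symm_apply v⟩
    have hinj : Function.Injective (fun i => (Equiv.ofBijective _ (hR.1 i)).symm v) := by
      intro i i' h
      by_contra hne
      apply hR.2 i i' hne ((Equiv.ofBijective _ (hR.1 i)).symm v)
      have h1 : R i ((Equiv.ofBijective _ (hR.1 i)).symm v) = v :=
        (Equiv.ofBijective _ (hR.1 i)).apply_symm_apply v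
      have h2 : R i' ((Equiv.ofBijective _ (hR.1 i')).symm v) = v :=
        (Equiv.ofBijective _ (hR.1 i')).apply_symm_apply v
      simp only at h
      rw [h1, h, h2]
    rw [hsplit, Finset.card_sdiff_of_subset (Finset.subset_univ _), himg,
      Finset.card_image_of_injective _ hinj]
    simp
  -- Hall's condition via double counting
  have hall : ∀ s : Finset (Fin n), s.card ≤ (s.biUnion t).card := by
    intro s
    have hpos : 0 < n - k := Nat.sub_pos_of_lt hk
    have key : (n - k) * s.card ≤ (n - k) * (s.biUnion t).card := by
      calc (n - k) * s.card = ∑ c ∈ s, (t c).card := by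
            rw [Finset.sum_congr rfl (fun c _ => hcardt c)]
            simp [mul_comm]
        _ = ∑ c ∈ s, ∑ v ∈ s.biUnion t, (if v ∈ t c then 1 else 0) := by
            refine Finset.sum_congr rfl fun c hc => ?_
            rw [Finset.sum_ite_mem, Finset.inter_eq_right.mpr
              (Finset.subset_biUnion_of_mem t hc)]
            simp
        _ = ∑ v ∈ s.biUnion t, ∑ c ∈ s, (if v ∈ t c then 1 else 0) :=
            Finset.sum_comm
        _ ≤ ∑ _v ∈ s.biUnion t, (n - k) := by
            refine Finset.sum_le_sum fun v _ => ?_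
            calc ∑ c ∈ s, (if v ∈ t c then 1 else 0)
                ≤ ∑ c ∈ Finset.univ, (if v ∈ t c then 1 else 0) :=
                  Finset.sum_le_sum_of_subset (Finset.subset_univ s)
              _ = (Finset.univ.filter fun c => v ∈ t c).card :=
                  (Finset.card_filter _ _).symm
              _ = n - k := hcardv v
        _ = (n - k) * (s.biUnion t).card := by simp [mul_comm]
    exact Nat.le_of_mul_le_mul_left key hpos
  obtain ⟨g, hginj, hgmem⟩ :=
    (Finset.all_card_le_biUnion_card_iff_exists_injective t).mp hall
  refine ⟨g, ⟨hginj, Finite.surjective_of_injective hginj⟩, fun i c => ?_⟩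
  exact fun h => (hmem c (g c)).mp (hgmem c) i h.symm
end

section
/- Let n ≥ 1, k ≤ n, and let R : Fin k → Fin n → Fin n be a k×n Latin rectangle. Then there exists a Latin square L of order n whose first k rows agree with R: for every i : Fin k and c : Fin n, L (Fin.castLE h i) c = R i c, where h : k ≤ n. -/
/-- `L` is a Latin square of order `n`: every row and every column is a
bijection of `Fin n`. -/
def IsLatinSquare {n : ℕ} (L : Fin n → Fin n → Fin n) : Prop :=
  (∀ i : Fin n, Function.Bijective (L i)) ∧
    ∀ j : Fin n, Function.Bijective (fun i : Fin n => L i j)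

open Finset

lemma latin_extend_step {n k : ℕ} (hk : k < n) (R : Fin k → Fin n → Fin n)
    (hR : IsLatinRectangle R) :
    ∃ R' : Fin (k + 1) → Fin n → Fin n, IsLatinRectangle R' ∧
      ∀ (i : Fin k) (c : Fin n), R' i.castSucc c = R i c := by
  classical
  set t : Fin n → Finset (Fin n) :=
    fun c => univ \ (univ.image (fun i => R i c)) with ht
  have hcol_inj : ∀ c, Function.Injective (fun i : Fin k => R i c) := by
    intro c i i' hii
    by_contra hne
    exact hR.2 i i' hne c hii
  have htcard : ∀ c, (t c).card = n - k := by
    intro c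
    rw [ht]
    simp only
    rw [card_sdiff_of_subset (subset_univ _), card_image_of_injective _ (hcol_inj c)]
    simp
  have hxcard : ∀ x : Fin n, (univ.filter (fun c => x ∈ t c)).card = n - k := by
    intro x
    have hg : ∀ i : Fin k, ∃ c, R i c = x := fun i => (hR.1 i).2 x
    choose g hgx using hg
    have hginj : Function.Injective g := by
      intro i i' hii
      by_contra hne
      exact hR.2 i i' hne (g i) (by rw [hgx, hii, hgx])
    have hset : univ.filter (fun c => x ∈ t c) = univ \ univ.image g := by
      ext c
      simp only [mem_filter, mem_univ, true_and, mem_sdiff, ht, mem_image, not_exists]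
      constructor
      · intro hc i hgi
        exact hc i (by rw [← hgi, hgx])
      · intro hc i hic
        exact hc i (((hR.1 i).1 (by rw [hic, hgx])).symm)
    rw [hset, card_sdiff_of_subset (subset_univ _), card_image_of_injective _ hginj]
    simp
  have hall : ∀ s : Finset (Fin n), s.card ≤ (s.biUnion t).card := by
    intro s
    set B := s.biUnion t with hB
    have h1 : ∀ c ∈ s, t c = B.filter (fun x => x ∈ t c) := by
      intro c hc
      ext x
      simp only [mem_filter, hB]
      constructor
      · intro hx
        exact ⟨mem_biUnion.2 ⟨c, hc, hx⟩, hx⟩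
      · exact fun hx => hx.2
    have key : ∑ c ∈ s, (t c).card = ∑ x ∈ B, (s.filter (fun c => x ∈ t c)).card := by
      calc ∑ c ∈ s, (t c).card
          = ∑ c ∈ s, (B.filter (fun x => x ∈ t c)).card :=
            Finset.sum_congr rfl (fun c hc => by rw [← h1 c hc])
        _ = ∑ c ∈ s, ∑ x ∈ B, (if x ∈ t c then 1 else 0) := by
            simp only [Finset.card_filter]
        _ = ∑ x ∈ B, ∑ c ∈ s, (if x ∈ t c then 1 else 0) := Finset.sum_comm
        _ = ∑ x ∈ B, (s.filter (fun c => x ∈ t c)).card := by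
            simp only [Finset.card_filter]
    have hle : ∑ c ∈ s, (t c).card ≤ B.card * (n - k) := by
      rw [key]
      calc ∑ x ∈ B, (s.filter (fun c => x ∈ t c)).card
          ≤ ∑ x ∈ B, (n - k) := by
            refine Finset.sum_le_sum (fun x _ => ?_)
            rw [← hxcard x]
            exact card_le_card (filter_subset_filter _ (subset_univ s))
        _ = B.card * (n - k) := by rw [Finset.sum_const, smul_eq_mul]
    have heq : ∑ c ∈ s, (t c).card = s.card * (n - k) := by
      rw [Finset.sum_congr rfl (fun c _ => htcard c), Finset.sum_const, smul_eq_mul]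
    have hpos : 0 < n - k := by omega
    have := heq ▸ hle
    exact Nat.le_of_mul_le_mul_right (by omega) hpos
  obtain ⟨f, hfinj, hft⟩ :=
    (Finset.all_card_le_biUnion_card_iff_existsInjective' t).1 hall
  have hfne : ∀ c (i : Fin k), f c ≠ R i c := by
    intro c i hcontra
    have := hft c
    rw [ht] at this
    simp only [mem_sdiff, mem_image, not_exists] at this
    exact this.2 i ⟨mem_univ i, hcontra.symm⟩
  have hfbij : Function.Bijective f := Finite.injective_iff_bijective.1 hfinj
  refine ⟨Fin.snoc R f, ⟨?_, ?_⟩, ?_⟩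
  · intro i
    rcases Fin.eq_castSucc_or_eq_last i with ⟨j, rfl⟩ | rfl
    · simpa [Fin.snoc_castSucc] using hR.1 j
    · simpa [Fin.snoc_last] using hfbij
  · intro i i' hne c
    rcases Fin.eq_castSucc_or_eq_last i with ⟨j, rfl⟩ | rfl <;>
      rcases Fin.eq_castSucc_or_eq_last i' with ⟨j', rfl⟩ | rfl
    · simp only [Fin.snoc_castSucc]
      exact hR.2 j j' (fun e => hne (by rw [e])) c
    · simp only [Fin.snoc_castSucc, Fin.snoc_last]
      exact fun e => hfne c j e.symm
    · simp only [Fin.snoc_castSucc, Fin.snoc_last]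
      exact hfne c j'
    · exact absurd rfl hne
  · intro i c
    simp [Fin.snoc_castSucc]

lemma latin_complete_aux : ∀ (m n k : ℕ) (hk : k + m = n)
    (R : Fin k → Fin n → Fin n), IsLatinRectangle R →
    ∃ L : Fin n → Fin n → Fin n, IsLatinRectangle L ∧
      ∀ (i : Fin k) (c : Fin n), L (Fin.castLE (by omega) i) c = R i c := by
  intro m
  induction m with
  | zero =>
    intro n k hk R hR
    have hkn : k = n := by omega
    subst hkn
    exact ⟨R, hR, fun i c => rfl⟩
  | succ m ih =>
    intro n k hk R hR
    obtain ⟨R', hR', hR'agree⟩ := latin_extend_step (by omega) R hR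
    obtain ⟨L, hL, hLagree⟩ := ih n (k + 1) (by omega) R' hR'
    refine ⟨L, hL, fun i c => ?_⟩
    have := hLagree i.castSucc c
    rw [hR'agree] at this
    exact this

/-- Every `k × n` Latin rectangle with `k ≤ n` can be completed to a Latin
square of order `n` whose first `k` rows agree with `R`. -/
theorem latin_rectangle_complete (n k : ℕ) (hn : 1 ≤ n) (h : k ≤ n)
    (R : Fin k → Fin n → Fin n) (hR : IsLatinRectangle R) :
    ∃ L : Fin n → Fin n → Fin n, IsLatinSquare L ∧
      ∀ (i : Fin k) (c : Fin n), L (Fin.castLE h i) c = R i c := by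
  obtain ⟨L, hL, hLagree⟩ := latin_complete_aux (n - k) n k (by omega) R hR
  refine ⟨L, ⟨hL.1, fun j => ?_⟩, fun i c => hLagree i c⟩
  refine Finite.injective_iff_bijective.1 ?_
  intro i i' hii
  by_contra hne
  exact hL.2 i i' hne j hii
end

section
/- Let n ≥ 2 and let σ, τ : Fin n → Fin n be bijections that disagree in every position, i.e., σ c ≠ τ c for all c : Fin n. Then there exists a Latin square L of order n having σ and τ among its rows, e.g., L 0 = σ and L 1 = τ. -/
open Finset

/-- For a fixed symbol `y`, the number of columns where `y` is still available
equals `n - k`. -/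
lemma col_count {n k : ℕ} (R : Fin k → Equiv.Perm (Fin n))
    (hcol : ∀ i i' j, R i j = R i' j → i = i') (y : Fin n) :
    (univ.filter fun j : Fin n => ∀ i, R i j ≠ y).card = n - k := by
  have he : (univ.filter fun j : Fin n => ∀ i, R i j ≠ y)
      = univ \ univ.image (fun i : Fin k => (R i).symm y) := by
    ext j
    simp only [mem_filter, mem_univ, true_and, mem_sdiff, mem_image, not_exists]
    constructor
    · intro h i hij
      exact h i (by rw [← hij]; simp)
    · intro h i hiy
      exact h i (by rw [← hiy]; simp)
  have hinj : Function.Injective (fun i : Fin k => (R i).symm y) := by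
    intro i i' h
    apply hcol i i' ((R i).symm y)
    simp only at h
    rw [Equiv.apply_symm_apply, h, Equiv.apply_symm_apply]
  rw [he, Finset.card_sdiff_of_subset (Finset.subset_univ _), Finset.card_univ, Fintype.card_fin,
    Finset.card_image_of_injective _ hinj, Finset.card_univ, Fintype.card_fin]

/-- One more discordant row can be added to a Latin rectangle with `k < n` rows. -/
lemma extend_step {n k : ℕ} (hk : k < n) (R : Fin k → Equiv.Perm (Fin n))
    (hcol : ∀ i i' j, R i j = R i' j → i = i') :
    ∃ e : Equiv.Perm (Fin n), ∀ j i, R i j ≠ e j := by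
  set t : Fin n → Finset (Fin n) :=
    fun j => univ.filter fun y => ∀ i, R i j ≠ y with ht
  have hcard : ∀ j, (t j).card = n - k := by
    intro j
    have he : t j = univ \ univ.image (fun i : Fin k => R i j) := by
      ext y
      simp [ht]
    have hinj : Function.Injective (fun i : Fin k => R i j) := fun i i' h => hcol i i' j h
    rw [he, Finset.card_sdiff_of_subset (Finset.subset_univ _), Finset.card_univ, Fintype.card_fin,
      Finset.card_image_of_injective _ hinj, Finset.card_univ, Fintype.card_fin]
  have hall : ∀ s : Finset (Fin n), s.card ≤ (s.biUnion t).card := by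
    intro s
    set B := s.biUnion t with hB
    have key : s.card * (n - k) ≤ B.card * (n - k) := by
      calc s.card * (n - k) = ∑ j ∈ s, (t j).card := by
            rw [Finset.sum_congr rfl fun j _ => hcard j]
            simp [mul_comm]
        _ = ∑ j ∈ s, ∑ y ∈ B, if y ∈ t j then 1 else 0 := by
            refine Finset.sum_congr rfl fun j hj => ?_
            rw [← Finset.card_filter]
            congr 1
            rw [Finset.filter_mem_eq_inter]
            exact (Finset.inter_eq_right.mpr (Finset.subset_biUnion_of_mem t hj)).symm
        _ = ∑ y ∈ B, ∑ j ∈ s, if y ∈ t j then 1 else 0 := Finset.sum_comm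
        _ = ∑ y ∈ B, (s.filter fun j => y ∈ t j).card := by
            refine Finset.sum_congr rfl fun y _ => ?_
            rw [Finset.card_filter]
        _ ≤ ∑ y ∈ B, (n - k) := by
            refine Finset.sum_le_sum fun y _ => ?_
            calc (s.filter fun j => y ∈ t j).card
                ≤ (univ.filter fun j => y ∈ t j).card :=
                  Finset.card_le_card (Finset.filter_subset_filter _ (Finset.subset_univ s))
              _ = n - k := by
                  rw [← col_count R hcol y]
                  congr 1
                  ext j
                  simp [ht]
        _ = B.card * (n - k) := by simp [mul_comm]
    exact Nat.le_of_mul_le_mul_right key (by omega)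
  obtain ⟨f, hfinj, hf⟩ := (Finset.all_card_le_biUnion_card_iff_existsInjective' t).mp hall
  refine ⟨Equiv.ofBijective f (Finite.injective_iff_bijective.mp hfinj), ?_⟩
  intro j i
  have := hf j
  simp only [ht, mem_filter] at this
  exact this.2 i

/-- Any Latin rectangle extends to a Latin square. -/
lemma extend_all {n : ℕ} : ∀ m k (hk : k ≤ n), n - k ≤ m →
    ∀ R : Fin k → Equiv.Perm (Fin n), (∀ i i' j, R i j = R i' j → i = i') →
    ∃ L : Fin n → Fin n → Fin n, IsLatinSquare L ∧
      ∀ i : Fin k, L (Fin.castLE hk i) = R i := by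
  intro m
  induction m with
  | zero =>
    intro k hk hm R hcol
    have hkn : k = n := by omega
    subst hkn
    refine ⟨fun i j => R i j, ⟨fun i => (R i).bijective, fun j => ?_⟩, fun i => ?_⟩
    · exact Finite.injective_iff_bijective.mp fun i i' h => hcol i i' j h
    · funext j
      congr 1
  | succ m ih =>
    intro k hk hm R hcol
    rcases le_or_gt (n - k) m with hle | hgt
    · exact ih k hk hle R hcol
    · have hlt : k < n := by omega
      obtain ⟨e, he⟩ := extend_step hlt R hcol
      set R' : Fin (k + 1) → Equiv.Perm (Fin n) := Fin.snoc R e with hR'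
      have hcol' : ∀ i i' j, R' i j = R' i' j → i = i' := by
        intro i i' j h
        induction i using Fin.lastCases with
        | last =>
          induction i' using Fin.lastCases with
          | last => rfl
          | cast i' =>
            simp only [hR', Fin.snoc_last, Fin.snoc_castSucc] at h
            exact absurd h.symm (he j i')
        | cast i =>
          induction i' using Fin.lastCases with
          | last =>
            simp only [hR', Fin.snoc_last, Fin.snoc_castSucc] at h
            exact absurd h (he j i)
          | cast i' =>
            simp only [hR', Fin.snoc_castSucc] at h
            exact congrArg Fin.castSucc (hcol i i' j h)
      obtain ⟨L, hL, hrow⟩ := ih (k + 1) hlt (by omega) R' hcol'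
      refine ⟨L, hL, fun i => ?_⟩
      have := hrow i.castSucc
      rw [show Fin.castLE hlt i.castSucc = Fin.castLE hk i from by ext; simp] at this
      rw [this, hR', Fin.snoc_castSucc]

/-- Two bijections of `Fin n` that disagree in every position can be placed
together as the first two rows of a Latin square of order `n`. -/
theorem latin_square_with_two_discordant_rows (n : ℕ) (hn : 2 ≤ n)
    (σ τ : Fin n → Fin n) (hσ : Function.Bijective σ) (hτ : Function.Bijective τ)
    (hdis : ∀ c : Fin n, σ c ≠ τ c) :
    ∃ L : Fin n → Fin n → Fin n, IsLatinSquare L ∧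
      L ⟨0, by omega⟩ = σ ∧ L ⟨1, hn⟩ = τ := by
  set R : Fin 2 → Equiv.Perm (Fin n) :=
    ![Equiv.ofBijective σ hσ, Equiv.ofBijective τ hτ] with hR
  have hcol : ∀ i i' j, R i j = R i' j → i = i' := by
    intro i i' j h
    fin_cases i <;> fin_cases i' <;> simp_all [hR, Equiv.ofBijective]
    first
    | exact absurd h (hdis j)
    | exact absurd h.symm (hdis j)
  obtain ⟨L, hL, hrow⟩ := extend_all n 2 hn (by omega) R hcol
  refine ⟨L, hL, ?_, ?_⟩
  · have := hrow ⟨0, by omega⟩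
    rw [show (Fin.castLE hn ⟨0, by omega⟩ : Fin n) = ⟨0, by omega⟩ from rfl] at this
    rw [this]; rfl
  · have := hrow ⟨1, by omega⟩
    rw [show (Fin.castLE hn ⟨1, by omega⟩ : Fin n) = ⟨1, hn⟩ from rfl] at this
    rw [this]; rfl
end

section
/- Let n ≥ 4. Then the share-a-row graph on Latin squares of order n is connected: for any two Latin squares L and M of order n, there exists a finite sequence L = L₀, L₁, …, L_m = M of Latin squares of order n such that each consecutive pair shares a row, i.e., for every t < m there exist indices a, b : Fin n with L_t a = L_{t+1} b (equality of functions Fin n → Fin n). -/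
open Finset Function Equiv

namespace Finset

variable {ι α : Type*} [Fintype ι] [DecidableEq α]

theorem exists_injective_of_le_card_of_card_filter_mem_le (t : ι → Finset α) {d : ℕ}
    (hd : 0 < d) (ht : ∀ i, d ≤ #(t i)) (hα : ∀ a, #{i | a ∈ t i} ≤ d) :
    ∃ f : ι → α, Injective f ∧ ∀ i, f i ∈ t i := by
  refine (all_card_le_biUnion_card_iff_exists_injective t).mp fun s ↦ ?_
  refine Nat.le_of_mul_le_mul_right (?_ : #s * d ≤ #(s.biUnion t) * d) hd
  refine card_mul_le_card_mul (fun i a ↦ a ∈ t i) (fun i hi ↦ ?_) (fun a _ ↦ ?_)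
  · exact (ht i).trans <| card_le_card fun a ha ↦ mem_filter.2 ⟨mem_biUnion.2 ⟨i, hi, ha⟩, ha⟩
  · exact (card_le_card (filter_subset_filter _ (subset_univ s))).trans (hα a)

theorem exists_injective_of_card_le_card_add_of_card_filter_notMem_le [Fintype α]
    (t : ι → Finset α) {d : ℕ} (hι : Fintype.card ι ≤ Fintype.card α) (hd : 2 * d ≤ Fintype.card α)
    (ht : ∀ i, Fintype.card α ≤ #(t i) + d) (hα : ∀ a, #{i | a ∉ t i} ≤ d) :
    ∃ f : ι → α, Injective f ∧ ∀ i, f i ∈ t i := by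
  refine (all_card_le_biUnion_card_iff_exists_injective t).mp fun s ↦ ?_
  rcases s.eq_empty_or_nonempty with rfl | ⟨i, hi⟩
  · simp
  by_cases hs : #s + d ≤ Fintype.card α
  · calc #s ≤ #(t i) := by linarith [ht i]
      _ ≤ #(s.biUnion t) := card_le_card (subset_biUnion_of_mem t hi)
  · have hcover : s.biUnion t = univ := eq_univ_of_forall fun a ↦ by
      by_contra ha
      have hsub : s ⊆ ({i | a ∉ t i} : Finset ι) := fun i hi ↦ by simp_all
      have := (card_le_card hsub).trans (hα a)
      omega
    rw [hcover, card_univ]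
    exact (card_le_univ s).trans hι

end Finset

theorem Equiv.Perm.exists_forall_apply_ne_of_injective {κ α : Type*} [Fintype κ] [Fintype α]
    [DecidableEq α] (R : κ → Perm α) (hR : ∀ a, Injective fun i ↦ R i a)
    (hκ : Fintype.card κ < Fintype.card α) : ∃ ρ : Perm α, ∀ i a, R i a ≠ ρ a := by
  set t : α → Finset α := fun a ↦ (univ.image fun i ↦ R i a)ᶜ
  have ht : ∀ a, Fintype.card α - Fintype.card κ ≤ #(t a) := fun a ↦ by
    have := card_image_le (s := univ) (f := fun i ↦ R i a)
    rw [card_compl, ← card_univ (α := κ)]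
    omega
  have hα : ∀ b, #{a | b ∈ t a} ≤ Fintype.card α - Fintype.card κ := fun b ↦ by
    have hinj : Injective fun i ↦ (R i).symm b := fun i j hij ↦
      hR ((R i).symm b) (by dsimp only at hij ⊢; rw [apply_symm_apply, hij, apply_symm_apply])
    have hpre : Fintype.card κ ≤ #{a | b ∉ t a} := by
      rw [← card_univ, ← card_image_of_injective univ hinj]
      refine card_le_card fun a ha ↦ ?_
      obtain ⟨i, -, rfl⟩ := mem_image.1 ha
      simpa [t] using ⟨i, apply_symm_apply _ _⟩
    have := card_filter_add_card_filter_not (s := univ) (fun a ↦ b ∈ t a)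
    rw [card_univ] at this
    omega
  obtain ⟨f, hf, hft⟩ :=
    exists_injective_of_le_card_of_card_filter_mem_le t (by omega) ht hα
  refine ⟨Equiv.ofBijective f (Finite.injective_iff_bijective.mp hf), fun i a hia ↦ ?_⟩
  exact (by simpa [t] using hft a : ∀ i, R i a ≠ f a) i hia

theorem Equiv.Perm.exists_forall_ne_of_four_le_card {α : Type*} [Fintype α] [DecidableEq α]
    (hα : 4 ≤ Fintype.card α) (σ τ : Perm α) : ∃ ρ : Perm α, ∀ a, σ a ≠ ρ a ∧ τ a ≠ ρ a := by
  set t : α → Finset α := fun a ↦ {σ a, τ a}ᶜ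
  have ht : ∀ a, Fintype.card α ≤ #(t a) + 2 := fun a ↦ by
    have := card_le_two (a := σ a) (b := τ a)
    rw [card_compl]
    omega
  have hmiss : ∀ b, #{a | b ∉ t a} ≤ 2 := fun b ↦ by
    refine (card_le_card fun a ha ↦ ?_).trans (card_le_two (a := σ.symm b) (b := τ.symm b))
    rcases (by simpa [t, or_iff_not_imp_left] using ha : b = σ a ∨ b = τ a) with rfl | rfl <;> simp
  obtain ⟨f, hf, hft⟩ := exists_injective_of_card_le_card_add_of_card_filter_notMem_le t le_rfl
    (by omega) ht hmiss
  refine ⟨Equiv.ofBijective f (Finite.injective_iff_bijective.mp hf), fun a ↦ ?_⟩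
  simpa [t, eq_comm] using hft a

theorem exists_isLatinSquare_of_injective {n k : ℕ} (hk : k ≤ n) (R : Fin k → Perm (Fin n))
    (hR : ∀ j, Injective fun i ↦ R i j) : ∃ L, IsLatinSquare L ∧ ∀ i, ∃ a, L a = R i := by
  induction hk using Nat.decreasingInduction with
  | self => exact ⟨fun a ↦ R a, ⟨fun a ↦ (R a).bijective,
      fun j ↦ Finite.injective_iff_bijective.mp (hR j)⟩, fun i ↦ ⟨i, rfl⟩⟩
  | of_succ k hk ih =>
    obtain ⟨ρ, hρ⟩ := Perm.exists_forall_apply_ne_of_injective R hR (by simpa using hk)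
    set R' : Fin (k + 1) → Perm (Fin n) := Fin.snoc R ρ
    have hR' : ∀ j, Injective fun i ↦ R' i j := fun j ↦ by
      change Injective ((· j) ∘ R')
      rw [Fin.comp_snoc, Fin.snoc_injective_iff]
      exact ⟨hR j, fun ⟨i, hi⟩ ↦ hρ i j hi⟩
    obtain ⟨L, hL, hrows⟩ := ih R' hR'
    exact ⟨L, hL, fun i ↦ by simpa [R'] using hrows i.castSucc⟩

theorem exists_isLatinSquare_of_forall_ne {n : ℕ} (hn : 2 ≤ n) (σ τ : Perm (Fin n))
    (hστ : ∀ j, σ j ≠ τ j) : ∃ L, IsLatinSquare L ∧ (∃ a, L a = σ) ∧ ∃ b, L b = τ := by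
  obtain ⟨L, hL, hrows⟩ := exists_isLatinSquare_of_injective hn ![σ, τ] fun j a b h ↦ by
    fin_cases a <;> fin_cases b
    exacts [rfl, absurd h (hστ j), absurd h.symm (hστ j), rfl]
  exact ⟨L, hL, by simpa using hrows 0, by simpa using hrows 1⟩

/-- For `n ≥ 4`, the share-a-row graph on Latin squares of order `n` is
connected: any two Latin squares are joined by a finite chain of Latin
squares in which consecutive members share a row. -/
theorem share_a_row_graph_connected (n : ℕ) (hn : 4 ≤ n)
    (L M : Fin n → Fin n → Fin n) (hL : IsLatinSquare L) (hM : IsLatinSquare M) :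
    ∃ (m : ℕ) (seq : ℕ → Fin n → Fin n → Fin n),
      seq 0 = L ∧ seq m = M ∧
      (∀ t : ℕ, t ≤ m → IsLatinSquare (seq t)) ∧
      (∀ t : ℕ, t < m → ∃ a b : Fin n, seq t a = seq (t + 1) b) := by
  let r₀ : Fin n := ⟨0, by omega⟩
  let σ := Equiv.ofBijective (L r₀) (hL.1 r₀)
  let τ := Equiv.ofBijective (M r₀) (hM.1 r₀)
  obtain ⟨ρ, hρ⟩ := Perm.exists_forall_ne_of_four_le_card (by simpa) σ τ
  obtain ⟨N₁, hN₁, ⟨a₁, ha₁⟩, b₁, hb₁⟩ :=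
    exists_isLatinSquare_of_forall_ne (by omega) σ ρ fun j ↦ (hρ j).1
  obtain ⟨N₂, hN₂, ⟨a₂, ha₂⟩, b₂, hb₂⟩ :=
    exists_isLatinSquare_of_forall_ne (by omega) ρ τ fun j ↦ (hρ j).2.symm
  refine ⟨3, fun | 0 => L | 1 => N₁ | 2 => N₂ | _ => M, rfl, rfl, fun t ht ↦ ?_, fun t ht ↦ ?_⟩
  · interval_cases t <;> assumption
  · interval_cases t
    exacts [⟨r₀, a₁, ha₁.symm⟩, ⟨b₁, a₂, hb₁.trans ha₂.symm⟩, ⟨b₂, r₀, hb₂⟩]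
end

section
/- Any two Latin squares of order 3 either have the same set of rows or share no row: for all Latin squares L and M of order 3, either {L a | a : Fin 3} = {M b | b : Fin 3} as sets of functions Fin 3 → Fin 3, or for all a, b : Fin 3, L a ≠ M b. -/
set_option maxHeartbeats 4000000 in
set_option synthInstance.maxHeartbeats 1000000 in
set_option synthInstance.maxSize 4000 in
/-- In `S₃`, at most two permutations can disagree with a given permutation
everywhere. -/
theorem discD : ∀ p q r s : Equiv.Perm (Fin 3),
    (∀ j, p j ≠ q j) → (∀ j, p j ≠ r j) → (∀ j, p j ≠ s j) →
    q = r ∨ q = s ∨ r = s := by decide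

/-- If two order-3 Latin squares share a row, the rows of `M` are rows of `L`. -/
theorem latin_sub (L M : Fin 3 → Fin 3 → Fin 3)
    (hL : IsLatinSquare L) (hM : IsLatinSquare M) (a b : Fin 3)
    (hab : L a = M b) : Set.range M ⊆ Set.range L := by
  rintro f ⟨b', rfl⟩
  by_cases hb : b' = b
  · exact ⟨a, by rw [hab, hb]⟩
  have haux : ∀ x : Fin 3, x + 1 ≠ x ∧ x + 2 ≠ x ∧ x + 1 ≠ x + 2 := by decide
  set a1 := a + 1 with ha1
  set a2 := a + 2 with ha2
  have ha1a : a1 ≠ a := (haux a).1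
  have ha2a : a2 ≠ a := (haux a).2.1
  have ha12 : a1 ≠ a2 := (haux a).2.2
  let p : Equiv.Perm (Fin 3) := Equiv.ofBijective (L a) (hL.1 a)
  let q : Equiv.Perm (Fin 3) := Equiv.ofBijective (M b') (hM.1 b')
  let r : Equiv.Perm (Fin 3) := Equiv.ofBijective (L a1) (hL.1 a1)
  let s : Equiv.Perm (Fin 3) := Equiv.ofBijective (L a2) (hL.1 a2)
  have hpq : ∀ j, p j ≠ q j := by
    intro j
    show L a j ≠ M b' j
    rw [hab]
    exact fun h => hb ((hM.2 j).1 h.symm)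
  have hpr : ∀ j, p j ≠ r j := fun j h => ha1a ((hL.2 j).1 h).symm
  have hps : ∀ j, p j ≠ s j := fun j h => ha2a ((hL.2 j).1 h).symm
  have hrs : r ≠ s := by
    intro h
    have : L a1 0 = L a2 0 := by
      have := congrArg (fun e : Equiv.Perm (Fin 3) => e 0) h
      exact this
    exact ha12 ((hL.2 0).1 this)
  rcases discD p q r s hpq hpr hps with h | h | h
  · exact ⟨a1, (congrArg (fun e : Equiv.Perm (Fin 3) => (e : Fin 3 → Fin 3)) h).symm⟩
  · exact ⟨a2, (congrArg (fun e : Equiv.Perm (Fin 3) => (e : Fin 3 → Fin 3)) h).symm⟩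
  · exact absurd h hrs

/-- Any two Latin squares of order 3 either have the same set of rows, or
share no row at all. -/
theorem latin_square_order_three_rows (L M : Fin 3 → Fin 3 → Fin 3)
    (hL : IsLatinSquare L) (hM : IsLatinSquare M) :
    Set.range L = Set.range M ∨ ∀ a b : Fin 3, L a ≠ M b := by
  by_cases h : ∃ a b, L a = M b
  · obtain ⟨a, b, hab⟩ := h
    left
    exact Set.Subset.antisymm (latin_sub M L hM hL b a hab.symm)
      (latin_sub L M hL hM a b hab)
  · right
    push_neg at h
    exact h
end

section
/- The share-a-row graph on Latin squares of order 3 is not connected: there exist Latin squares L and M of order 3 such that no finite sequence L = L₀, L₁, …, L_m = M of Latin squares of order 3, in which each consecutive pair shares a row (∃ a b : Fin 3, L_t a = L_{t+1} b), joins L to M. -/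
instance {n : ℕ} : DecidablePred (@IsLatinSquare n) := fun _ => by
  unfold IsLatinSquare; infer_instance

theorem IsLatinSquare.sum_col {n : ℕ} [NeZero n] {L : Fin n → Fin n → Fin n}
    (hL : IsLatinSquare L) (j : Fin n) : ∑ i, L i j = ∑ x : Fin n, x :=
  (hL.2 j).sum_comp id

theorem Fin.eq_of_ne_zero_of_add_add_eq_zero {x y z : Fin 3} :
    x ≠ 0 → y ≠ 0 → z ≠ 0 → x + y + z = 0 → y = x ∧ z = x := by
  revert x y z
  decide

theorem IsLatinSquare.row_sub_eq {L : Fin 3 → Fin 3 → Fin 3} (hL : IsLatinSquare L)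
    (i : Fin 3) : L i 1 - L i 0 = L 0 1 - L 0 0 := by
  have hsum : ∑ k, (L k 1 - L k 0) = 0 := by
    rw [Finset.sum_sub_distrib, hL.sum_col, hL.sum_col, sub_self]
  have hne (k : Fin 3) : L k 1 - L k 0 ≠ 0 :=
    sub_ne_zero.mpr ((hL.1 k).injective.ne (by decide))
  rw [Fin.sum_univ_three] at hsum
  obtain ⟨h1, h2⟩ := Fin.eq_of_ne_zero_of_add_add_eq_zero (hne 0) (hne 1) (hne 2) hsum
  fin_cases i
  exacts [rfl, h1, h2]

theorem IsLatinSquare.row_sub_eq_of_share_row {L M : Fin 3 → Fin 3 → Fin 3}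
    (hL : IsLatinSquare L) (hM : IsLatinSquare M) {a b : Fin 3} (hab : L a = M b) :
    L 0 1 - L 0 0 = M 0 1 - M 0 0 := by
  rw [← hL.row_sub_eq a, ← hM.row_sub_eq b, hab]

theorem Nat.apply_eq_apply_zero_of_forall_lt {β : Sort*} {f : ℕ → β} {m : ℕ}
    (h : ∀ t < m, f t = f (t + 1)) : f m = f 0 := by
  induction m with
  | zero => rfl
  | succ m ih =>
    rw [← h m m.lt_succ_self, ih fun t ht => h t (ht.trans m.lt_succ_self)]

/-- The share-a-row graph on Latin squares of order 3 is not connected. -/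
theorem share_a_row_graph_order_three_disconnected :
    ∃ L M : Fin 3 → Fin 3 → Fin 3, IsLatinSquare L ∧ IsLatinSquare M ∧
      ¬ ∃ (m : ℕ) (seq : ℕ → Fin 3 → Fin 3 → Fin 3),
        seq 0 = L ∧ seq m = M ∧
        (∀ t : ℕ, t ≤ m → IsLatinSquare (seq t)) ∧
        (∀ t : ℕ, t < m → ∃ a b : Fin 3, seq t a = seq (t + 1) b) := by
  refine ⟨fun i j => i + j, fun i j => i - j, by decide, by decide, ?_⟩
  rintro ⟨m, seq, h0, hm, hlat, hshare⟩
  have hinv : seq m 0 1 - seq m 0 0 = seq 0 0 1 - seq 0 0 0 :=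
    Nat.apply_eq_apply_zero_of_forall_lt (f := fun t => seq t 0 1 - seq t 0 0) fun t ht =>
      have ⟨_, _, hab⟩ := hshare t ht
      (hlat t ht.le).row_sub_eq_of_share_row (hlat (t + 1) ht) hab
  rw [h0, hm] at hinv
  exact absurd hinv (by decide)
end

section
/- Let G be a simple graph on a finite vertex type V. Then the number of acyclic orientations of G is at most the product over all vertices v ∈ V of (deg(v) + 1), where deg(v) is the degree of v in G. -/
/-!
An acyclic orientation is determined by its out-degree sequence, and the out-degree of `v` lies
in `{0, …, deg v}`. For injectivity, let `r ≠ s` be orientations with the same out-degrees, `r`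
acyclic, and let `D ⊆ r` consist of the edges that `s` orients the other way. Since `D` is
acyclic, some vertex `v` has a `D`-in-edge but no `D`-out-edge; at `v` the orientation `s` then
has strictly more out-edges than `r`.
-/

open Finset Relation

theorem Relation.exists_mem_forall_not_of_irrefl_transGen {V : Type*} [Finite V]
    {r : V → V → Prop} (hr : Std.Irrefl (TransGen r)) {s : Set V} (hs : s.Nonempty) :
    ∃ v ∈ s, ∀ w ∈ s, ¬ r v w := by
  have : IsTrans V (flip (TransGen r)) := ⟨fun _ _ _ hab hbc => hbc.trans hab⟩
  have : Std.Irrefl (flip (TransGen r)) := ⟨hr.irrefl⟩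
  obtain ⟨v, hv, hmin⟩ := (Finite.wellFounded_of_trans_of_irrefl (flip (TransGen r))).has_min s hs
  exact ⟨v, hv, fun w hw hvw => hmin w hw (TransGen.single hvw)⟩

section OutDegree

open scoped Classical

variable {V : Type*} [Fintype V]

noncomputable def Relation.outDegree (r : V → V → Prop) (v : V) : ℕ := #{w | r v w}

namespace SimpleGraph

variable {G : SimpleGraph V} {r s : V → V → Prop}

structure IsOrientation (G : SimpleGraph V) (r : V → V → Prop) : Prop where
  adj_of_rel : ∀ i j, r i j → G.Adj i j
  xor_of_adj : ∀ i j, G.Adj i j → Xor (r i j) (r j i)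

theorem outDegree_le_degree [DecidableRel G.Adj] (hr : ∀ i j, r i j → G.Adj i j) (v : V) :
    outDegree r v ≤ G.degree v := by
  rw [← card_neighborFinset_eq_degree]
  exact card_le_card fun w hw => (mem_neighborFinset G v w).2 (hr v w (mem_filter.1 hw).2)

theorem IsOrientation.outDegree_eq (hr : G.IsOrientation r) (hs : ∀ i j, s i j → G.Adj i j)
    (v : V) : outDegree s v = #{w | s v w ∧ r v w} + #{w | s v w ∧ r w v} := by
  rw [outDegree, ← card_filter_add_card_filter_not (p := fun w => r v w), filter_filter,
    filter_filter]
  congr 2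
  ext w
  simp only [mem_filter, mem_univ, true_and, and_congr_right_iff]
  exact fun hsvw => xor_iff_not_iff'.1 (hr.xor_of_adj v w (hs v w hsvw))

theorem IsOrientation.le_of_outDegree_eq (hr : G.IsOrientation r)
    (hr_acyclic : Std.Irrefl (TransGen r)) (hs : G.IsOrientation s)
    (h : outDegree r = outDegree s) : r ≤ s := by
  by_contra hne
  obtain ⟨i, j, hrij, hsij⟩ : ∃ i j, r i j ∧ ¬ s i j := by
    simpa only [Pi.le_def, le_Prop_eq, not_forall, exists_prop] using hne
  have hsji : s j i := (xor_iff_not_iff'.1 (hs.xor_of_adj i j (hr.adj_of_rel i j hrij))).1 hsij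
  obtain ⟨v, ⟨u, hru, hsu⟩, hsink⟩ := exists_mem_forall_not_of_irrefl_transGen hr_acyclic
    (s := {v | ∃ u, r u v ∧ s v u}) ⟨j, i, hrij, hsji⟩
  have hout_r : #{w | r v w ∧ s w v} = 0 :=
    card_eq_zero.2 <| filter_eq_empty_iff.2 fun w _ ⟨hrvw, hswv⟩ => hsink w ⟨v, hrvw, hswv⟩ hrvw
  have hout_s : 0 < #{w | s v w ∧ r w v} := card_pos.2 ⟨u, by simp [hsu, hru]⟩
  have hcommon : #{w | r v w ∧ s v w} = #{w | s v w ∧ r v w} := by simp only [and_comm]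
  have := congr_fun h v
  rw [hs.outDegree_eq hr.adj_of_rel, hr.outDegree_eq hs.adj_of_rel] at this
  omega

theorem IsOrientation.eq_of_outDegree_eq (hr : G.IsOrientation r)
    (hr_acyclic : Std.Irrefl (TransGen r)) (hs : G.IsOrientation s)
    (hs_acyclic : Std.Irrefl (TransGen s)) (h : outDegree r = outDegree s) : r = s :=
  le_antisymm (hr.le_of_outDegree_eq hr_acyclic hs h) (hs.le_of_outDegree_eq hs_acyclic hr h.symm)

end SimpleGraph

end OutDegree

theorem card_acyclic_orientations_le_general {V : Type*} [Fintype V]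
    (G : SimpleGraph V) [DecidableRel G.Adj] :
    Nat.card {r : V → V → Prop //
        (∀ i j : V, r i j → G.Adj i j) ∧
        (∀ i j : V, G.Adj i j → Xor' (r i j) (r j i)) ∧
        Irreflexive (Relation.TransGen r)} ≤
      ∏ v : V, (G.degree v + 1) := by
  refine (Nat.card_le_card_of_injective (β := ∀ v, Fin (G.degree v + 1))
    (fun r v => ⟨outDegree r.1 v, Nat.lt_succ_of_le (G.outDegree_le_degree r.2.1 v)⟩)
    fun r s hrs => Subtype.ext ?_).trans_eq (by simp [Nat.card_pi])
  exact SimpleGraph.IsOrientation.eq_of_outDegree_eq ⟨r.2.1, r.2.2.1⟩ ⟨r.2.2.2⟩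
    ⟨s.2.1, s.2.2.1⟩ ⟨s.2.2.2⟩ (funext fun v => congr_arg Fin.val (congr_fun hrs v))

/-- The number of acyclic orientations of a simple graph `G` on a finite
vertex type is at most `∏ v, (deg v + 1)`. -/
theorem card_acyclic_orientations_le {V : Type*} [Fintype V] [DecidableEq V]
    (G : SimpleGraph V) [DecidableRel G.Adj] :
    Nat.card {r : V → V → Prop //
        (∀ i j : V, r i j → G.Adj i j) ∧
        (∀ i j : V, G.Adj i j → Xor' (r i j) (r j i)) ∧
        Irreflexive (Relation.TransGen r)} ≤
      ∏ v : V, (G.degree v + 1) :=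
  card_acyclic_orientations_le_general G
end
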